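/- Let T>0, 1<γ<2, and set γ₀ := (γ−1)/2 (so 0<γ₀<1/2). For every v ∈ C²([0,T]) and every w ∈ C¹([0,T]), the fundamental bilinear identity holds: ∫_0^T D_{0+}^γ (v − v(0) − (·)v'(0))(t) · w(t) dt = ∫_0^T D_{0+}^{γ₀}(v' − v'(0))(t) · D_{T−}^{γ₀} w(t) dt, where both integrands are defined for every t ∈ (0,T) and both integrals converge absolutely. -/

import Mathlib

/-!
Put `f = v''` and `β = 1 - γ₀`, so that `β + β = 3 - γ`. Since `v - v 0 - t v' 0 = I¹ I¹ f` and
`v' - v' 0 = I¹ f`, the semigroup law `I^a I^b = I^(a+b)` (Fubini plus a Beta integral) turns the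
left integrand into `I^(2-γ) f · w` and the right one into
`I^β f · (w T (T - t)^(β-1) / Γ(β) - I_{T-}^β w')`. An ordinary integration by parts brings the left
side to `I^(3-γ) f (T) w T - ∫ I^(3-γ) f · w'`; the fractional one,
`∫ (I^β F) h = ∫ F (I_{T-}^β h)`, brings the right side to the same expression because
`I^β I^β = I^(3-γ)`.
-/

open MeasureTheory Set

/-- Left Riemann–Liouville fractional integral of order `α`:
`(I_{0+}^α v)(t) = (1/Γ(α)) ∫_0^t (t-s)^(α-1) v(s) ds`. -/
noncomputable def ILeft (α : ℝ) (v : ℝ → ℝ) (t : ℝ) : ℝ :=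
  (1 / Real.Gamma α) * ∫ s in (0:ℝ)..t, (t - s) ^ (α - 1) * v s

/-- Right Riemann–Liouville fractional integral of order `α` on `(0,T)`:
`(I_{T-}^α v)(t) = (1/Γ(α)) ∫_t^T (s-t)^(α-1) v(s) ds`. -/
noncomputable def IRight (α T : ℝ) (v : ℝ → ℝ) (t : ℝ) : ℝ :=
  (1 / Real.Gamma α) * ∫ s in t..T, (s - t) ^ (α - 1) * v s

open Filter

lemma ILeft_apply_zero (β : ℝ) (f : ℝ → ℝ) : ILeft β f 0 = 0 := by
  simp [ILeft]

lemma ILeft_one (f : ℝ → ℝ) (t : ℝ) : ILeft 1 f t = ∫ s in (0:ℝ)..t, f s := by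
  simp [ILeft]

lemma ILeft_neg (β : ℝ) (f : ℝ → ℝ) (t : ℝ) : ILeft β (fun s => -f s) t = -ILeft β f t := by
  simp [ILeft, intervalIntegral.integral_neg]

lemma IRight_eq_ILeft_comp_sub (β T : ℝ) (w : ℝ → ℝ) (t : ℝ) :
    IRight β T w t = ILeft β (fun s => w (T - s)) (T - t) := by
  have h := intervalIntegral.integral_comp_sub_left (fun x => (x - t) ^ (β - 1) * w x)
    (a := 0) (b := T - t) T
  simp only [sub_sub_cancel, sub_zero, sub_right_comm T _ t] at h
  rw [IRight, ILeft, h]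

lemma intervalIntegrable_sub_rpow {β : ℝ} (hβ : 0 < β) (c a b : ℝ) :
    IntervalIntegrable (fun s => (c - s) ^ (β - 1)) volume a b := by
  have h := (intervalIntegral.intervalIntegrable_rpow' (r := β - 1) (a := c - a) (b := c - b)
    (by linarith)).comp_sub_left c
  simpa using h

lemma integral_sub_rpow {β : ℝ} (hβ : 0 < β) (t : ℝ) :
    ∫ s in (0:ℝ)..t, (t - s) ^ (β - 1) = t ^ β / β := by
  rw [intervalIntegral.integral_comp_sub_left (fun x => x ^ (β - 1)),
    integral_rpow (Or.inl (by linarith))]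
  simp [Real.zero_rpow hβ.ne']

lemma ILeft_sub_const {β : ℝ} (hβ : 0 < β) {φ : ℝ → ℝ} (hφ : Continuous φ) (c t : ℝ) :
    ILeft β (fun s => φ s - c) t = ILeft β φ t - c * t ^ β / Real.Gamma (β + 1) := by
  have hΓ : Real.Gamma β ≠ 0 := (Real.Gamma_pos_of_pos hβ).ne'
  simp only [ILeft, mul_sub]
  rw [intervalIntegral.integral_sub
      ((intervalIntegrable_sub_rpow hβ t 0 t).mul_continuousOn hφ.continuousOn)
      ((intervalIntegrable_sub_rpow hβ t 0 t).mul_const c),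
    intervalIntegral.integral_mul_const, integral_sub_rpow hβ, Real.Gamma_add_one hβ.ne']
  field_simp

-- The substitution `s = t u` fixes the domain of integration, so that continuity in `t` follows
-- by dominated convergence.
lemma ILeft_eq_rpow_mul_integral {β : ℝ} (hβ : 0 < β) (f : ℝ → ℝ) {t : ℝ} (ht : 0 ≤ t) :
    ILeft β f t =
      t ^ β / Real.Gamma β * ∫ u in (0:ℝ)..1, (1 - u) ^ (β - 1) * f (t * u) := by
  rcases ht.eq_or_lt with rfl | ht
  · simp [ILeft_apply_zero, Real.zero_rpow hβ.ne']
  have hscale := intervalIntegral.integral_comp_mul_left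
    (fun s => (t - s) ^ (β - 1) * f s) (a := 0) (b := 1) ht.ne'
  simp only [mul_zero, mul_one, smul_eq_mul] at hscale
  have hfactor : ∫ u in (0:ℝ)..1, (t - t * u) ^ (β - 1) * f (t * u) =
      t ^ (β - 1) * ∫ u in (0:ℝ)..1, (1 - u) ^ (β - 1) * f (t * u) := by
    rw [← intervalIntegral.integral_const_mul]
    refine intervalIntegral.integral_congr fun u hu => ?_
    rw [uIcc_of_le zero_le_one] at hu
    rw [show t - t * u = t * (1 - u) by ring,
      Real.mul_rpow ht.le (by linarith [hu.2]), mul_assoc]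
  have hpow : t ^ β = t * t ^ (β - 1) := by
    rw [← Real.rpow_one_add' ht.le (by linarith)]; ring_nf
  have hI : ∫ s in (0:ℝ)..t, (t - s) ^ (β - 1) * f s =
      t ^ β * ∫ u in (0:ℝ)..1, (1 - u) ^ (β - 1) * f (t * u) := by
    rw [hpow, mul_assoc, ← hfactor, hscale, ← mul_assoc, mul_inv_cancel₀ ht.ne', one_mul]
  rw [ILeft, hI]
  ring

lemma ILeft_continuousOn {β : ℝ} (hβ : 0 < β) {f : ℝ → ℝ} (hf : Continuous f) :
    ContinuousOn (ILeft β f) (Ici 0) := by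
  have hJ : Continuous fun t => ∫ u in (0:ℝ)..1, (1 - u) ^ (β - 1) * f (t * u) := by
    refine continuous_iff_continuousAt.mpr fun t₀ => ?_
    obtain ⟨M, hM⟩ := (isCompact_Icc (a := -(|t₀| + 1)) (b := |t₀| + 1))
      |>.exists_bound_of_continuousOn hf.continuousOn
    refine intervalIntegral.continuousAt_of_dominated_interval
      (bound := fun u => (1 - u) ^ (β - 1) * M)
      (Eventually.of_forall fun t =>
        ((intervalIntegrable_sub_rpow hβ 1 0 1).mul_continuousOn
          (by fun_prop : Continuous fun u => f (t * u)).continuousOn).def'.1) ?_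
      ((intervalIntegrable_sub_rpow hβ 1 0 1).mul_const M)
      (Eventually.of_forall fun u _ => by fun_prop)
    filter_upwards [Metric.ball_mem_nhds t₀ one_pos] with t ht
    refine Eventually.of_forall fun u hu => ?_
    rw [uIoc_of_le zero_le_one] at hu
    rw [norm_mul, Real.norm_of_nonneg (Real.rpow_nonneg (by linarith [hu.2]) _)]
    refine mul_le_mul_of_nonneg_left (hM _ ?_) (Real.rpow_nonneg (by linarith [hu.2]) _)
    rw [Metric.mem_ball, Real.dist_eq] at ht
    have : |t * u| ≤ |t₀| + 1 := by
      rw [abs_mul, abs_of_pos hu.1]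
      nlinarith [abs_nonneg t, abs_sub_abs_le_abs_sub t t₀, hu.2]
    exact abs_le.mp this
  exact (((Real.continuous_rpow_const hβ.le).div_const _).mul hJ).continuousOn.congr
    fun t ht => ILeft_eq_rpow_mul_integral hβ f ht

lemma IRight_continuousOn {β T : ℝ} (hβ : 0 < β) {h : ℝ → ℝ} (hh : Continuous h) :
    ContinuousOn (IRight β T h) (Iic T) := by
  rw [show IRight β T h = fun t => ILeft β (fun s => h (T - s)) (T - t) from
    funext (IRight_eq_ILeft_comp_sub β T h)]
  exact (ILeft_continuousOn hβ (by fun_prop)).comp (by fun_prop)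
    fun _ ht => mem_Ici.mpr (sub_nonneg.mpr ht)

noncomputable def triangleIntegrand (b T : ℝ) (h g : ℝ → ℝ) (s r : ℝ) : ℝ :=
  (Ioc 0 T).indicator h s * (Ioo 0 T).indicator (fun x => x ^ (b - 1)) (s - r) *
    (Ioc 0 T).indicator g r

section triangleIntegrand

variable {b T : ℝ} {h g : ℝ → ℝ}

-- Cutting the kernel off at `T` makes this a bounded multiple of a convolution integrand of two
-- integrable functions.
lemma integrable_triangleIntegrand (hb : 0 < b) (hT : 0 ≤ T) (hh : IntegrableOn h (Ioc 0 T))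
    (hg : ContinuousOn g (Icc 0 T)) :
    Integrable (Function.uncurry (triangleIntegrand b T h g)) (volume.prod volume) := by
  obtain ⟨M, hM⟩ := isCompact_Icc.exists_bound_of_continuousOn hg
  have hK : Integrable ((Ioo 0 T).indicator fun x : ℝ => x ^ (b - 1)) :=
    (integrable_indicator_iff measurableSet_Ioo).mpr <|
      ((intervalIntegrable_iff_integrableOn_Ioc_of_le hT).mp
        (intervalIntegral.intervalIntegrable_rpow' (by linarith))).mono_set Ioo_subset_Ioc_self
  have hconv : Integrable (fun p : ℝ × ℝ => (Ioc 0 T).indicator h p.1 *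
      (Ioo 0 T).indicator (fun x => x ^ (b - 1)) (p.1 - p.2)) (volume.prod volume) := by
    simpa [Function.comp_def] using
      ((hh.integrable_indicator measurableSet_Ioc).convolution_integrand
        (ContinuousLinearMap.mul ℝ ℝ) hK.comp_neg).swap
  have hg' : AEStronglyMeasurable ((Ioc 0 T).indicator g) volume :=
    (aestronglyMeasurable_indicator_iff measurableSet_Ioc).mpr
      ((hg.mono Ioc_subset_Icc_self).aestronglyMeasurable measurableSet_Ioc)
  refine hconv.mul_bdd (c := M) hg'.comp_snd (Eventually.of_forall fun p => ?_)
  by_cases hp : p.2 ∈ Ioc 0 T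
  · simpa [indicator_of_mem hp] using hM p.2 (Ioc_subset_Icc_self hp)
  · simpa [indicator_of_notMem hp] using (norm_nonneg _).trans (hM 0 ⟨le_rfl, hT⟩)

lemma integral_triangleIntegrand_left (s : ℝ) :
    ∫ r, triangleIntegrand b T h g s r =
      (Ioc 0 T).indicator (fun s => h s * ∫ r in (0:ℝ)..s, (s - r) ^ (b - 1) * g r) s := by
  by_cases hs : s ∈ Ioc 0 T
  · have hslice : triangleIntegrand b T h g s =
        (Ioo 0 s).indicator fun r => h s * ((s - r) ^ (b - 1) * g r) := by
      funext r
      by_cases hr : r ∈ Ioo 0 s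
      · have hr' : r ∈ Ioc 0 T := ⟨hr.1, hr.2.le.trans hs.2⟩
        have hsr : s - r ∈ Ioo 0 T := ⟨by linarith [hr.2], by linarith [hr.1, hs.2]⟩
        simp [triangleIntegrand, hs, hr, hr', hsr, mul_assoc]
      · have : s - r ∉ Ioo 0 T ∨ r ∉ Ioc 0 T := by
          by_contra! hc
          exact hr ⟨hc.2.1, by linarith [hc.1.1]⟩
        rcases this with hout | hout <;> simp [triangleIntegrand, hr, hout]
    rw [hslice, integral_indicator measurableSet_Ioo, indicator_of_mem hs, integral_const_mul,
      ← integral_Ioc_eq_integral_Ioo, ← intervalIntegral.integral_of_le hs.1.le]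
  · simp [triangleIntegrand, hs]

lemma integral_triangleIntegrand_right (r : ℝ) :
    ∫ s, triangleIntegrand b T h g s r =
      (Ioc 0 T).indicator (fun r => g r * ∫ s in r..T, (s - r) ^ (b - 1) * h s) r := by
  by_cases hr : r ∈ Ioc 0 T
  · have hslice : (triangleIntegrand b T h g · r) =
        (Ioc r T).indicator fun s => g r * ((s - r) ^ (b - 1) * h s) := by
      funext s
      by_cases hs : s ∈ Ioc r T
      · have hs' : s ∈ Ioc 0 T := ⟨hr.1.trans hs.1, hs.2⟩
        have hsr : s - r ∈ Ioo 0 T := ⟨by linarith [hs.1], by linarith [hr.1, hs.2]⟩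
        simp only [triangleIntegrand, indicator_of_mem hs, indicator_of_mem hs',
          indicator_of_mem hsr, indicator_of_mem hr]
        ring
      · have : s ∉ Ioc 0 T ∨ s - r ∉ Ioo 0 T := by
          by_contra! hc
          exact hs ⟨by linarith [hc.2.1], hc.1.2⟩
        rcases this with hout | hout <;> simp [triangleIntegrand, hs, hout]
    rw [hslice, integral_indicator measurableSet_Ioc, indicator_of_mem hr, integral_const_mul,
      ← intervalIntegral.integral_of_le hr.2]
  · simp [triangleIntegrand, hr]

lemma integral_mul_integral_rpow_sub_swap (hb : 0 < b) (hT : 0 ≤ T)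
    (hh : IntegrableOn h (Ioc 0 T)) (hg : ContinuousOn g (Icc 0 T)) :
    ∫ s in (0:ℝ)..T, h s * ∫ r in (0:ℝ)..s, (s - r) ^ (b - 1) * g r =
      ∫ r in (0:ℝ)..T, g r * ∫ s in r..T, (s - r) ^ (b - 1) * h s := by
  have hswap := integral_integral_swap (integrable_triangleIntegrand hb hT hh hg)
  simp only [integral_triangleIntegrand_left, integral_triangleIntegrand_right,
    integral_indicator measurableSet_Ioc] at hswap
  rwa [intervalIntegral.integral_of_le hT, intervalIntegral.integral_of_le hT]

end triangleIntegrand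

lemma integral_ILeft_mul_eq_integral_mul_IRight {b T : ℝ} (hb : 0 < b) (hT : 0 ≤ T)
    {g h : ℝ → ℝ} (hg : ContinuousOn g (Icc 0 T)) (hh : IntegrableOn h (Ioc 0 T)) :
    ∫ t in (0:ℝ)..T, ILeft b g t * h t = ∫ t in (0:ℝ)..T, g t * IRight b T h t := by
  calc ∫ t in (0:ℝ)..T, ILeft b g t * h t
      = 1 / Real.Gamma b * ∫ s in (0:ℝ)..T, h s * ∫ r in (0:ℝ)..s, (s - r) ^ (b - 1) * g r := by
        rw [← intervalIntegral.integral_const_mul]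
        congr 1 with s
        rw [ILeft]; ring
    _ = 1 / Real.Gamma b * ∫ r in (0:ℝ)..T, g r * ∫ s in r..T, (s - r) ^ (b - 1) * h s := by
        rw [integral_mul_integral_rpow_sub_swap hb hT hh hg]
    _ = ∫ t in (0:ℝ)..T, g t * IRight b T h t := by
        rw [← intervalIntegral.integral_const_mul]
        congr 1 with r
        rw [IRight]; ring

lemma integral_rpow_mul_sub_rpow {a b c : ℝ} (ha : 0 < a) (hb : 0 < b) (hc : 0 < c) :
    ∫ x in (0:ℝ)..c, x ^ (b - 1) * (c - x) ^ (a - 1) =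
      c ^ (a + b - 1) * (Real.Gamma a * Real.Gamma b / Real.Gamma (a + b)) := by
  have hβ := Complex.betaIntegral_scaled b a hc
  rw [Complex.betaIntegral_eq_Gamma_mul_div _ _ (by simpa) (by simpa)] at hβ
  have hcast : ((∫ x in (0:ℝ)..c, x ^ (b - 1) * (c - x) ^ (a - 1) : ℝ) : ℂ) =
      ∫ x in (0:ℝ)..c, (x : ℂ) ^ ((b : ℂ) - 1) * ((c : ℂ) - x) ^ ((a : ℂ) - 1) := by
    rw [← intervalIntegral.integral_ofReal]
    refine intervalIntegral.integral_congr fun x hx => ?_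
    rw [uIcc_of_le hc.le] at hx
    push_cast
    rw [Complex.ofReal_cpow hx.1, Complex.ofReal_cpow (by linarith [hx.2])]
    push_cast; ring_nf
  apply Complex.ofReal_injective
  rw [hcast, hβ]
  push_cast
  rw [Complex.ofReal_cpow hc.le, ← Complex.Gamma_ofReal, ← Complex.Gamma_ofReal,
    ← Complex.Gamma_ofReal]
  push_cast
  ring_nf

lemma IRight_sub_rpow {a b t r : ℝ} (ha : 0 < a) (hb : 0 < b) (hr : r < t) :
    IRight b t (fun s => (t - s) ^ (a - 1)) r =
      Real.Gamma a / Real.Gamma (a + b) * (t - r) ^ (a + b - 1) := by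
  have hshift := intervalIntegral.integral_comp_add_left
    (fun s => (s - r) ^ (b - 1) * (t - s) ^ (a - 1)) r (a := 0) (b := t - r)
  simp only [add_sub_cancel_left, add_zero, add_sub_cancel, sub_add_eq_sub_sub] at hshift
  rw [IRight, ← hshift, integral_rpow_mul_sub_rpow ha hb (by linarith)]
  have := (Real.Gamma_pos_of_pos hb).ne'
  field_simp

lemma ILeft_ILeft {a b : ℝ} (ha : 0 < a) (hb : 0 < b) {f : ℝ → ℝ} (hf : Continuous f) {t : ℝ}
    (ht : 0 ≤ t) : ILeft a (ILeft b f) t = ILeft (a + b) f t := by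
  have hΓ := (Real.Gamma_pos_of_pos ha).ne'
  have hkernel : IntegrableOn (fun s => (t - s) ^ (a - 1)) (Ioc 0 t) :=
    (intervalIntegrable_iff_integrableOn_Ioc_of_le ht).mp (intervalIntegrable_sub_rpow ha t 0 t)
  calc ILeft a (ILeft b f) t
      = 1 / Real.Gamma a * ∫ s in (0:ℝ)..t, ILeft b f s * (t - s) ^ (a - 1) := by
        simp only [ILeft, mul_comm]
    _ = 1 / Real.Gamma a * ∫ s in (0:ℝ)..t, f s * IRight b t (fun s => (t - s) ^ (a - 1)) s := by
        rw [integral_ILeft_mul_eq_integral_mul_IRight hb ht hf.continuousOn hkernel]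
    _ = 1 / Real.Gamma a * ∫ s in (0:ℝ)..t,
          Real.Gamma a / Real.Gamma (a + b) * ((t - s) ^ (a + b - 1) * f s) := by
        simp only [intervalIntegral.integral_of_le ht, integral_Ioc_eq_integral_Ioo]
        congr 1
        refine setIntegral_congr_fun measurableSet_Ioo fun s hs => ?_
        rw [IRight_sub_rpow ha hb hs.2]; ring
    _ = ILeft (a + b) f t := by
        rw [intervalIntegral.integral_const_mul, ILeft]
        field_simp

lemma hasDerivAt_ILeft_add_one {β : ℝ} (hβ : 0 < β) {f : ℝ → ℝ} (hf : Continuous f) {x : ℝ}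
    (hx : 0 < x) : HasDerivAt (ILeft (β + 1) f) (ILeft β f x) x := by
  have hcont := ILeft_continuousOn hβ hf
  have hprim : HasDerivAt (fun y => ∫ s in (0:ℝ)..y, ILeft β f s) (ILeft β f x) x :=
    intervalIntegral.integral_hasDerivAt_right
      ((hcont.mono (uIcc_of_le hx.le ▸ Icc_subset_Ici_self)).intervalIntegrable)
      ((hcont.mono Ioi_subset_Ici_self).stronglyMeasurableAtFilter isOpen_Ioi x hx)
      (hcont.continuousAt (Ici_mem_nhds hx))
  refine hprim.congr_of_eventuallyEq (eventually_of_mem (Ioi_mem_nhds hx) fun y hy => ?_)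
  show ILeft (β + 1) f y = ∫ s in (0:ℝ)..y, ILeft β f s
  rw [← ILeft_one, ILeft_ILeft one_pos hβ hf (le_of_lt hy), add_comm]

lemma ILeft_sub_apply_zero {β : ℝ} (hβ : 0 < β) {φ : ℝ → ℝ} (hφ : ContDiff ℝ 1 φ) {t : ℝ}
    (ht : 0 ≤ t) : ILeft β (fun s => φ s - φ 0) t = ILeft (β + 1) (deriv φ) t := by
  have hprim : (fun s => φ s - φ 0) = ILeft 1 (deriv φ) := by
    funext s
    rw [ILeft_one, intervalIntegral.integral_deriv_eq_sub
      (fun y _ => hφ.differentiable one_ne_zero y)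
      ((hφ.continuous_deriv le_rfl).intervalIntegrable 0 s)]
  rw [hprim, ILeft_ILeft hβ one_pos (hφ.continuous_deriv le_rfl) ht]

lemma eqOn_deriv_ILeft_sub_apply_zero {β : ℝ} (hβ : 0 < β) {φ : ℝ → ℝ} (hφ : ContDiff ℝ 1 φ) :
    EqOn (deriv (ILeft β fun s => φ s - φ 0)) (ILeft β (deriv φ)) (Ioi 0) := fun _ hx =>
  ((hasDerivAt_ILeft_add_one hβ (hφ.continuous_deriv le_rfl) hx).congr_of_eventuallyEq
    (eventually_of_mem (Ioi_mem_nhds hx) fun _ hy =>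
      ILeft_sub_apply_zero hβ hφ (le_of_lt hy))).deriv

lemma eqOn_deriv_deriv_ILeft_sub_taylor {α : ℝ} (hα : 0 < α) {v : ℝ → ℝ} (hv : ContDiff ℝ 2 v) :
    EqOn (deriv (deriv (ILeft α fun s => v s - v 0 - s * deriv v 0)))
      (ILeft α (deriv (deriv v))) (Ioi 0) := by
  have hv' : ContDiff ℝ 1 (deriv v) := hv.iterate_deriv' 1 1
  set φ : ℝ → ℝ := fun s => v s - s * deriv v 0
  have hφ : ContDiff ℝ 1 φ := (hv.of_le one_le_two).sub (contDiff_id.mul contDiff_const)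
  have hderiv : deriv φ = fun s => deriv v s - deriv v 0 := by
    funext s
    exact ((hv.differentiable two_ne_zero s).hasDerivAt.sub
      ((hasDerivAt_id s).mul_const (deriv v 0))).deriv.trans (by ring)
  have htaylor : (fun s => v s - v 0 - s * deriv v 0) = fun s => φ s - φ 0 := by
    funext s; simp only [φ]; ring
  intro x hx
  rw [htaylor, (eqOn_deriv_ILeft_sub_apply_zero hα hφ).deriv isOpen_Ioi hx, hderiv,
    eqOn_deriv_ILeft_sub_apply_zero hα hv' hx]

lemma hasDerivAt_ILeft {β : ℝ} (hβ : 0 < β) {φ : ℝ → ℝ} (hφ : ContDiff ℝ 1 φ) {x : ℝ}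
    (hx : 0 < x) :
    HasDerivAt (ILeft β φ) (φ 0 * x ^ (β - 1) / Real.Gamma β + ILeft β (deriv φ) x) x := by
  have hsplit : ∀ y, 0 ≤ y →
      ILeft β φ y = φ 0 * y ^ β / Real.Gamma (β + 1) + ILeft (β + 1) (deriv φ) y := by
    intro y hy
    rw [← ILeft_sub_apply_zero hβ hφ hy, ILeft_sub_const hβ hφ.continuous]
    ring
  have hpow : HasDerivAt (fun y => φ 0 * y ^ β / Real.Gamma (β + 1))
      (φ 0 * x ^ (β - 1) / Real.Gamma β) x := by
    refine (((Real.hasDerivAt_rpow_const (p := β) (Or.inl hx.ne')).const_mul (φ 0)).div_const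
      (Real.Gamma (β + 1))).congr_deriv ?_
    rw [Real.Gamma_add_one hβ.ne']
    field_simp [(Real.Gamma_pos_of_pos hβ).ne']
  refine (hpow.add (hasDerivAt_ILeft_add_one hβ (hφ.continuous_deriv le_rfl) hx))
    |>.congr_of_eventuallyEq (eventually_of_mem (Ioi_mem_nhds hx) fun y hy => hsplit y hy.le)

lemma hasDerivAt_IRight {β T : ℝ} (hβ : 0 < β) {w : ℝ → ℝ} (hw : ContDiff ℝ 1 w) {t : ℝ}
    (ht : t < T) :
    HasDerivAt (IRight β T w)
      (-(w T * (T - t) ^ (β - 1) / Real.Gamma β - IRight β T (deriv w) t)) t := by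
  have hrefl : ContDiff ℝ 1 fun s => w (T - s) := hw.comp (contDiff_const.sub contDiff_id)
  have hleft := (hasDerivAt_ILeft hβ hrefl (sub_pos.mpr ht)).comp t ((hasDerivAt_id t).const_sub T)
  have hderiv : deriv (fun s => w (T - s)) = fun s => -deriv w (T - s) :=
    funext fun s => deriv_comp_const_sub w T s
  rw [show IRight β T w = fun t => ILeft β (fun s => w (T - s)) (T - t) from
    funext (IRight_eq_ILeft_comp_sub β T w)]
  refine hleft.congr_deriv ?_
  rw [hderiv, ILeft_neg, IRight_eq_ILeft_comp_sub, sub_zero]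
  ring

lemma integral_ILeft_mul_eq_sub {α T : ℝ} (hα : 0 < α) (hT : 0 ≤ T) {g w : ℝ → ℝ}
    (hg : Continuous g) (hw : ContDiff ℝ 1 w) :
    IntervalIntegrable (fun t => ILeft α g t * w t) volume 0 T ∧
      ∫ t in (0:ℝ)..T, ILeft α g t * w t =
        ILeft (α + 1) g T * w T - ∫ t in (0:ℝ)..T, ILeft (α + 1) g t * deriv w t := by
  have hcont : ∀ {β}, 0 < β → ContinuousOn (ILeft β g) (uIcc 0 T) := fun hβ =>
    (ILeft_continuousOn hβ hg).mono (uIcc_of_le hT ▸ Icc_subset_Ici_self)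
  have hibp := intervalIntegral.integral_mul_deriv_eq_deriv_mul_of_hasDeriv_right
    hw.continuous.continuousOn (hcont (by linarith : 0 < α + 1))
    (fun x _ => (hw.differentiable one_ne_zero x).hasDerivAt.hasDerivWithinAt)
    (fun x hx => (hasDerivAt_ILeft_add_one hα hg
      (by simpa [hT] using hx.1)).hasDerivWithinAt)
    ((hw.continuous_deriv le_rfl).intervalIntegrable 0 T) (hcont hα).intervalIntegrable
  refine ⟨((hcont hα).mul hw.continuous.continuousOn).intervalIntegrable, ?_⟩
  simpa only [ILeft_apply_zero, mul_zero, zero_mul, sub_zero, mul_comm] using hibp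

lemma integral_ILeft_mul_rpow_sub_IRight_eq_sub {β T : ℝ} (hβ : 0 < β) (hT : 0 ≤ T)
    {g h : ℝ → ℝ} (hg : Continuous g) (hh : Continuous h) (c : ℝ) :
    IntervalIntegrable (fun t => ILeft β g t *
        (c * (T - t) ^ (β - 1) / Real.Gamma β - IRight β T h t)) volume 0 T ∧
      ∫ t in (0:ℝ)..T, ILeft β g t * (c * (T - t) ^ (β - 1) / Real.Gamma β - IRight β T h t) =
        ILeft (β + β) g T * c - ∫ t in (0:ℝ)..T, ILeft (β + β) g t * h t := by
  have hG : ContinuousOn (ILeft β g) (uIcc 0 T) :=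
    (ILeft_continuousOn hβ hg).mono (uIcc_of_le hT ▸ Icc_subset_Ici_self)
  have hsing : IntervalIntegrable
      (fun t => c / Real.Gamma β * ((T - t) ^ (β - 1) * ILeft β g t)) volume 0 T :=
    ((intervalIntegrable_sub_rpow hβ T 0 T).mul_continuousOn hG).const_mul _
  have hreg : IntervalIntegrable (fun t => ILeft β g t * IRight β T h t) volume 0 T :=
    (hG.mul ((IRight_continuousOn hβ hh).mono fun t ht => by
      rw [uIcc_of_le hT] at ht; exact ht.2)).intervalIntegrable
  have hsplit : (fun t => ILeft β g t * (c * (T - t) ^ (β - 1) / Real.Gamma β - IRight β T h t)) =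
      fun t => c / Real.Gamma β * ((T - t) ^ (β - 1) * ILeft β g t) -
        ILeft β g t * IRight β T h t := by
    funext t; ring
  have hsemi : ∀ t ∈ uIcc 0 T, ILeft β (ILeft β g) t * h t = ILeft (β + β) g t * h t :=
    fun t ht => by rw [ILeft_ILeft hβ hβ hg (uIcc_of_le hT ▸ ht).1]
  have hunfold : ILeft β (ILeft β g) T =
      1 / Real.Gamma β * ∫ t in (0:ℝ)..T, (T - t) ^ (β - 1) * ILeft β g t := rfl
  refine ⟨hsplit ▸ hsing.sub hreg, ?_⟩
  rw [hsplit, intervalIntegral.integral_sub hsing hreg, intervalIntegral.integral_const_mul,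
    ← integral_ILeft_mul_eq_integral_mul_IRight hβ hT (uIcc_of_le hT ▸ hG) hh.integrableOn_Ioc,
    intervalIntegral.integral_congr hsemi, ← ILeft_ILeft hβ hβ hg hT, hunfold]
  ring

/-- The fundamental bilinear identity: for `1 < γ < 2`, `γ₀ = (γ-1)/2`, `v ∈ C²([0,T])` and
`w ∈ C¹([0,T])`,
`∫_0^T D_{0+}^γ (v - v(0) - t v'(0)) · w dt = ∫_0^T D_{0+}^{γ₀}(v' - v'(0)) · D_{T-}^{γ₀} w dt`,
both integrands being absolutely integrable on `(0,T)`.  Here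
`D_{0+}^γ u = (d/dt)² I_{0+}^{2-γ} u`, `D_{0+}^{γ₀} u = (d/dt) I_{0+}^{1-γ₀} u` and
`D_{T-}^{γ₀} u = -(d/dt) I_{T-}^{1-γ₀} u`. -/
theorem bilinear_identity (T γ : ℝ) (hT : 0 < T) (hγ1 : 1 < γ) (hγ2 : γ < 2)
    (v w : ℝ → ℝ) (hv : ContDiff ℝ 2 v) (hw : ContDiff ℝ 1 w) :
    IntegrableOn
      (fun t => deriv (deriv (ILeft (2 - γ) (fun s => v s - v 0 - s * deriv v 0))) t * w t)
      (Ioo 0 T) ∧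
    IntegrableOn
      (fun t => deriv (ILeft (1 - (γ - 1) / 2) (fun s => deriv v s - deriv v 0)) t *
        (-(deriv (IRight (1 - (γ - 1) / 2) T w) t)))
      (Ioo 0 T) ∧
    (∫ t in Ioo (0:ℝ) T,
        deriv (deriv (ILeft (2 - γ) (fun s => v s - v 0 - s * deriv v 0))) t * w t) =
      ∫ t in Ioo (0:ℝ) T,
        deriv (ILeft (1 - (γ - 1) / 2) (fun s => deriv v s - deriv v 0)) t *
          (-(deriv (IRight (1 - (γ - 1) / 2) T w) t)) := by
  set α := 2 - γ
  set β := 1 - (γ - 1) / 2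
  have hα : 0 < α := by simp only [α]; linarith
  have hβ : 0 < β := by simp only [β]; linarith
  have hv' : ContDiff ℝ 1 (deriv v) := hv.iterate_deriv' 1 1
  have hv'' : Continuous (deriv (deriv v)) := hv'.continuous_deriv le_rfl
  have hlhs : EqOn
      (fun t => deriv (deriv (ILeft α fun s => v s - v 0 - s * deriv v 0)) t * w t)
      (fun t => ILeft α (deriv (deriv v)) t * w t) (Ioo 0 T) := fun t ht => by
    dsimp only
    rw [eqOn_deriv_deriv_ILeft_sub_taylor hα hv ht.1]
  have hrhs : EqOn
      (fun t => deriv (ILeft β fun s => deriv v s - deriv v 0) t * -deriv (IRight β T w) t)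
      (fun t => ILeft β (deriv (deriv v)) t *
        (w T * (T - t) ^ (β - 1) / Real.Gamma β - IRight β T (deriv w) t)) (Ioo 0 T) :=
    fun t ht => by
      dsimp only
      rw [eqOn_deriv_ILeft_sub_apply_zero hβ hv' ht.1, (hasDerivAt_IRight hβ hw ht.2).deriv,
        neg_neg]
  obtain ⟨hint_lhs, heq_lhs⟩ := integral_ILeft_mul_eq_sub hα hT.le hv'' hw
  obtain ⟨hint_rhs, heq_rhs⟩ := integral_ILeft_mul_rpow_sub_IRight_eq_sub hβ hT.le hv''
    (hw.continuous_deriv le_rfl) (w T)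
  rw [intervalIntegrable_iff_integrableOn_Ioo_of_le hT.le] at hint_lhs hint_rhs
  refine ⟨hint_lhs.congr_fun hlhs.symm measurableSet_Ioo,
    hint_rhs.congr_fun hrhs.symm measurableSet_Ioo, ?_⟩
  rw [setIntegral_congr_fun measurableSet_Ioo hlhs, setIntegral_congr_fun measurableSet_Ioo hrhs,
    ← integral_Ioc_eq_integral_Ioo, ← integral_Ioc_eq_integral_Ioo,
    ← intervalIntegral.integral_of_le hT.le, ← intervalIntegral.integral_of_le hT.le,
    heq_lhs, heq_rhs, show β + β = α + 1 by ring]
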